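/- For λ near 1, ω(λ) = i√2 sin(α/2) (λ−1)^{1/2} G(λ), where G is analytic in a neighborhood of λ = 1 and G(λ) = 1 + (λ−1)(1/4 − (2/3) sin²(α/2)) + O((λ−1)²). -/

import Mathlib

/-!
With `v = (z² - 1)^{1/2} sin(α/2)` one has `ω = i arctan v`, and `arctan v = v A(v²)` where
`A(t) = ∑ (-1)ⁿ tⁿ / (2n + 1)` is analytic on the unit disc with `A(0) = 1` and `A'(0) = -1/3`.
For `Re z > 0` the principal square root splits as
`(z² - 1)^{1/2} = √2 (z - 1)^{1/2} ((z + 1)/2)^{1/2}`, so `ω = i √2 sin(α/2) (z - 1)^{1/2} G(z)`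
with `G(z) = ((z + 1)/2)^{1/2} A(sin²(α/2) (z² - 1))`, and `G'(1) = 1/4 + 2 sin²(α/2) A'(0)`.
-/

open Complex

/-- The function `ω(λ) = (1/2) ln((1 + i(λ²−1)^{1/2} sin(α/2))/(1 − i(λ²−1)^{1/2} sin(α/2)))`,
with principal branches (so `(λ²−1)^{1/2} > 0` for real `λ > 1`, and the cut
of `(λ²−1)^{1/2}` lies on `[−1,1]`). -/
noncomputable def omegaFn (α z : ℂ) : ℂ :=
  (1 / 2) * Complex.log
    ((1 + Complex.I * (z ^ 2 - 1) ^ ((1 : ℂ) / 2) * Complex.sin (α / 2))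
      / (1 - Complex.I * (z ^ 2 - 1) ^ ((1 : ℂ) / 2) * Complex.sin (α / 2)))

open Set Topology
open scoped Real

namespace Complex

theorem arg_add_arg_mem_Ioc_of_abs_sub_lt {x y : ℂ} (hx : x ≠ 0) (hy : y ≠ 0)
    (h : |arg x + arg y - arg (x * y)| < 2 * π) : arg x + arg y ∈ Ioc (-π) π := by
  have hangle : ((arg x + arg y : ℝ) : Real.Angle) = arg (x * y) := by
    rw [Real.Angle.coe_add, arg_mul_coe_angle hx hy]
  obtain ⟨k, hk⟩ := Real.Angle.angle_eq_iff_two_pi_dvd_sub.mp hangle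
  have hk0 : k = 0 := by
    rw [hk, abs_mul, abs_of_pos Real.two_pi_pos, mul_lt_iff_lt_one_right Real.two_pi_pos] at h
    exact Int.abs_lt_one_iff.mp (by exact_mod_cast h)
  rw [hk0, Int.cast_zero, mul_zero, sub_eq_zero] at hk
  exact hk ▸ arg_mem_Ioc _

theorem mul_cpow_of_arg_add_arg_mem_Ioc {x y : ℂ} (hx : x ≠ 0) (hy : y ≠ 0)
    (h : arg x + arg y ∈ Ioc (-π) π) (w : ℂ) : (x * y) ^ w = x ^ w * y ^ w := by
  rw [cpow_def_of_ne_zero (mul_ne_zero hx hy), log_mul hx hy h, add_mul, exp_add,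
    ← cpow_def_of_ne_zero hx, ← cpow_def_of_ne_zero hy]

theorem ofReal_mul_cpow {r : ℝ} (hr : 0 < r) {x : ℂ} (hx : x ≠ 0) (w : ℂ) :
    (r * x) ^ w = (r : ℂ) ^ w * x ^ w :=
  mul_cpow_of_arg_add_arg_mem_Ioc (ofReal_ne_zero.mpr hr.ne') hx
    (by rw [arg_ofReal_of_nonneg hr.le, zero_add]; exact arg_mem_Ioc x) w

theorem ofReal_cpow_one_half {x : ℝ} (hx : 0 ≤ x) : (x : ℂ) ^ ((1 : ℂ) / 2) = (√x : ℝ) := by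
  rw [Real.sqrt_eq_rpow, ofReal_cpow hx]
  push_cast
  rfl

theorem cpow_one_half_sq (x : ℂ) : (x ^ ((1 : ℂ) / 2)) ^ 2 = x := by
  rw [one_div]
  exact cpow_ofNat_inv_pow x 2

end Complex

noncomputable def arctanDivCoeff (n : ℕ) : ℂ := (-1) ^ n / (2 * n + 1)

/-- `arctanDiv t = arctan √t / √t`, defined by its power series at `0`. -/
noncomputable def arctanDiv : ℂ → ℂ := FormalMultilinearSeries.ofScalarsSum arctanDivCoeff

theorem norm_arctanDivCoeff_le (n : ℕ) : ‖arctanDivCoeff n‖ ≤ 1 := by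
  have h : (1 : ℝ) ≤ ‖(2 * n + 1 : ℂ)‖ := by
    rw [show (2 * n + 1 : ℂ) = ((2 * n + 1 : ℕ) : ℂ) by push_cast; rfl, norm_natCast]
    exact_mod_cast Nat.le_add_left 1 (2 * n)
  rw [arctanDivCoeff, norm_div, norm_pow, norm_neg, norm_one, one_pow]
  exact div_le_one_of_le₀ h (norm_nonneg _)

theorem one_le_radius_arctanDivSeries :
    1 ≤ (FormalMultilinearSeries.ofScalars ℂ arctanDivCoeff).radius := by
  simpa using FormalMultilinearSeries.le_radius_of_bound _ 1 (r := 1) fun n => by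
    simpa using norm_arctanDivCoeff_le n

theorem hasFPowerSeriesAt_arctanDiv :
    HasFPowerSeriesAt arctanDiv (FormalMultilinearSeries.ofScalars ℂ arctanDivCoeff) 0 :=
  (FormalMultilinearSeries.hasFPowerSeriesOnBall _
    (zero_lt_one.trans_le one_le_radius_arctanDivSeries)).hasFPowerSeriesAt

theorem hasSum_arctanDiv {t : ℂ} (ht : ‖t‖ < 1) :
    HasSum (fun n => arctanDivCoeff n * t ^ n) (arctanDiv t) := by
  have ht' : t ∈ Metric.eball 0 (FormalMultilinearSeries.ofScalars ℂ arctanDivCoeff).radius := by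
    rw [Metric.mem_eball, edist_zero_right, enorm_eq_nnnorm]
    exact lt_of_lt_of_le (by exact_mod_cast ht) one_le_radius_arctanDivSeries
  have h := FormalMultilinearSeries.hasSum _ ht'
  simp only [FormalMultilinearSeries.ofScalars_apply_eq, smul_eq_mul] at h
  exact h

theorem arctanDiv_zero : arctanDiv 0 = 1 := by
  simp [arctanDiv, arctanDivCoeff]

theorem hasDerivAt_arctanDiv_zero : HasDerivAt arctanDiv (-1 / 3) 0 := by
  have h := hasFPowerSeriesAt_arctanDiv.hasDerivAt
  rw [FormalMultilinearSeries.ofScalars_apply_eq] at h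
  norm_num [arctanDivCoeff] at h
  rwa [neg_div]

theorem arctan_eq_mul_arctanDiv {v : ℂ} (hv : ‖v‖ < 1) : arctan v = v * arctanDiv (v ^ 2) := by
  have hv2 : ‖v ^ 2‖ < 1 := by
    rw [norm_pow]
    exact pow_lt_one₀ (norm_nonneg v) hv two_ne_zero
  refine (hasSum_arctan hv).unique (((hasSum_arctanDiv hv2).mul_left v).congr_fun fun n => ?_)
  rw [arctanDivCoeff, ← pow_mul]
  push_cast
  ring

/-- As `0 < re z`, the numbers `z - 1`, `z + 1` and `(z - 1) * (z + 1)` lie in the same closed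
half plane `0 ≤ im` or open half plane `im < 0`, and `|arg (z + 1)| < π / 2`, so the arguments add
without wrapping around. -/
theorem cpow_one_half_sq_sub_one {z : ℂ} (hz : 0 < z.re) :
    (z ^ 2 - 1) ^ ((1 : ℂ) / 2) = (z - 1) ^ ((1 : ℂ) / 2) * (z + 1) ^ ((1 : ℂ) / 2) := by
  rcases eq_or_ne z 1 with rfl | hz1
  · norm_num
  have hx : z - 1 ≠ 0 := sub_ne_zero.mpr hz1
  have hy_re : 0 < (z + 1).re := by simp only [add_re, one_re]; linarith
  have hy : z + 1 ≠ 0 := fun h => by simp [h] at hy_re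
  have hy_arg : |arg (z + 1)| < π / 2 := abs_arg_lt_pi_div_two_iff.mpr (Or.inl hy_re)
  have him : ((z - 1) * (z + 1)).im = 2 * z.re * z.im := by
    simp only [mul_im, sub_re, add_re, sub_im, add_im, one_re, one_im]
    ring
  rw [show z ^ 2 - 1 = (z - 1) * (z + 1) by ring]
  refine mul_cpow_of_arg_add_arg_mem_Ioc hx hy (arg_add_arg_mem_Ioc_of_abs_sub_lt hx hy ?_) _
  rw [abs_lt] at hy_arg ⊢
  rcases le_or_gt 0 z.im with h | h
  · have hx_arg : 0 ≤ arg (z - 1) := arg_nonneg_iff.mpr (by simpa using h)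
    have hy_arg' : 0 ≤ arg (z + 1) := arg_nonneg_iff.mpr (by simpa using h)
    have hxy_arg : 0 ≤ arg ((z - 1) * (z + 1)) := arg_nonneg_iff.mpr (by rw [him]; positivity)
    constructor <;> linarith [arg_le_pi (z - 1), arg_le_pi ((z - 1) * (z + 1)), Real.pi_pos]
  · have hx_arg : arg (z - 1) < 0 := arg_neg_iff.mpr (by simpa using h)
    have hy_arg' : arg (z + 1) < 0 := arg_neg_iff.mpr (by simpa using h)
    have hxy_arg : arg ((z - 1) * (z + 1)) < 0 :=
      arg_neg_iff.mpr (by rw [him]; exact mul_neg_of_pos_of_neg (by positivity) h)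
    constructor <;>
      linarith [neg_pi_lt_arg (z - 1), neg_pi_lt_arg ((z - 1) * (z + 1)), Real.pi_pos]

theorem omegaFn_eq_I_mul_arctan (α z : ℂ) :
    omegaFn α z = I * arctan ((z ^ 2 - 1) ^ ((1 : ℂ) / 2) * sin (α / 2)) := by
  rw [omegaFn, arctan, ← mul_assoc, mul_div_assoc', mul_neg, I_mul_I]
  ring_nf

/-- The factor `G` in `ω(z) = i √2 sin(α/2) (z - 1)^{1/2} G(z)`. -/
noncomputable def omegaRegularPart (α z : ℂ) : ℂ :=
  ((z + 1) / 2) ^ ((1 : ℂ) / 2) * arctanDiv (sin (α / 2) ^ 2 * (z ^ 2 - 1))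

theorem omegaFn_eq_mul_omegaRegularPart {α z : ℂ} (hz : 0 < z.re)
    (hv : ‖sin (α / 2) ^ 2 * (z ^ 2 - 1)‖ < 1) :
    omegaFn α z = I * (Real.sqrt 2 : ℝ) * sin (α / 2) * (z - 1) ^ ((1 : ℂ) / 2)
      * omegaRegularPart α z := by
  have hv_sq : ((z ^ 2 - 1) ^ ((1 : ℂ) / 2) * sin (α / 2)) ^ 2 = sin (α / 2) ^ 2 * (z ^ 2 - 1) := by
    rw [mul_pow, cpow_one_half_sq, mul_comm]
  have hv_norm : ‖(z ^ 2 - 1) ^ ((1 : ℂ) / 2) * sin (α / 2)‖ < 1 := by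
    rw [← hv_sq, norm_pow] at hv
    exact (pow_lt_one_iff_of_nonneg (norm_nonneg _) two_ne_zero).mp hv
  have hy : (z + 1) / 2 ≠ 0 := fun h => by
    have := congrArg re h
    simp only [div_ofNat_re, add_re, one_re, zero_re] at this
    linarith
  have hsplit : (z + 1) ^ ((1 : ℂ) / 2) = (Real.sqrt 2 : ℝ) * ((z + 1) / 2) ^ ((1 : ℂ) / 2) := by
    rw [← ofReal_cpow_one_half zero_le_two, ← ofReal_mul_cpow two_pos hy]
    congr 1
    push_cast
    ring
  rw [omegaFn_eq_I_mul_arctan, arctan_eq_mul_arctanDiv hv_norm, hv_sq, cpow_one_half_sq_sub_one hz,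
    hsplit, omegaRegularPart]
  ring

theorem analyticAt_omegaRegularPart (α : ℂ) : AnalyticAt ℂ (omegaRegularPart α) 1 := by
  refine AnalyticAt.mul ?_ (hasFPowerSeriesAt_arctanDiv.analyticAt.comp_of_eq (by fun_prop) ?_)
  · exact AnalyticAt.cpow (by fun_prop) analyticAt_const (by norm_num)
  · ring

theorem omegaRegularPart_one (α : ℂ) : omegaRegularPart α 1 = 1 := by
  norm_num [omegaRegularPart, arctanDiv_zero]

theorem hasDerivAt_omegaRegularPart_one (α : ℂ) :
    HasDerivAt (omegaRegularPart α) (1 / 4 - 2 / 3 * sin (α / 2) ^ 2) 1 := by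
  have hsqrt : HasDerivAt (fun z : ℂ => ((z + 1) / 2) ^ ((1 : ℂ) / 2)) (1 / 4) 1 := by
    convert (((hasDerivAt_id (1 : ℂ)).add_const 1).div_const 2).cpow_const (c := (1 : ℂ) / 2)
      (by norm_num) using 1
    simp
    norm_num
  have harctanDiv := hasDerivAt_arctanDiv_zero.comp_of_eq (1 : ℂ)
    (((hasDerivAt_pow 2 (1 : ℂ)).sub_const 1).const_mul (sin (α / 2) ^ 2)) (by ring)
  refine (hsqrt.mul harctanDiv).congr_deriv ?_
  norm_num [arctanDiv_zero]
  ring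

/-- For `λ` near `1` (off the cut `(1−δ,1]`),
`ω(λ) = i√2 sin(α/2) (λ−1)^{1/2} G(λ)` where `G` is analytic in a
neighborhood of `λ = 1` with
`G(λ) = 1 + (λ−1)(1/4 − (2/3) sin²(α/2)) + O((λ−1)²)`. -/
theorem omega_factorization (α : ℂ) :
    ∃ δ > (0 : ℝ), ∃ G : ℂ → ℂ,
      AnalyticAt ℂ G 1 ∧ G 1 = 1 ∧
      deriv G 1 = 1 / 4 - (2 / 3) * Complex.sin (α / 2) ^ 2 ∧
      ∀ z ∈ Metric.ball (1 : ℂ) δ,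
        z ∉ {x : ℂ | x.im = 0 ∧ x.re ≤ 1} →
        omegaFn α z = Complex.I * (Real.sqrt 2 : ℝ) * Complex.sin (α / 2)
            * (z - 1) ^ ((1 : ℂ) / 2) * G z := by
  have hnear : ∀ᶠ z in 𝓝 (1 : ℂ), 0 < z.re ∧ ‖sin (α / 2) ^ 2 * (z ^ 2 - 1)‖ < 1 :=
    (continuousAt_const.eventually_lt continuous_re.continuousAt (by norm_num)).and
      ((by fun_prop : Continuous fun z : ℂ => ‖sin (α / 2) ^ 2 * (z ^ 2 - 1)‖).continuousAt
        |>.eventually_lt continuousAt_const (by norm_num))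
  obtain ⟨δ, hδ, hball⟩ := Metric.eventually_nhds_iff.mp hnear
  refine ⟨δ, hδ, omegaRegularPart α, analyticAt_omegaRegularPart α, omegaRegularPart_one α,
    (hasDerivAt_omegaRegularPart_one α).deriv, fun z hz _ => ?_⟩
  obtain ⟨hre, hv⟩ := hball hz
  exact omegaFn_eq_mul_omegaRegularPart hre hv
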